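/- arXiv:2009.02535 — 2 statements merged into one kernel-verified Lean document; each statement's English description precedes it below -/
import Mathlib

section
/- Structures that are simultaneously complexity-optimal (complexity 3n-6) and latency-optimal (latency ⌈log₂(n-1)⌉) exist if and only if n ∈ {3, 4, 6}; equivalently, for n ≥ 3, δ + ⌈log₂(n-2^δ)⌉ = ⌈log₂(n-1)⌉ with δ = ⌊log₂(n/2)⌋ iff n ∈ {3,4,6}. -/
/-!
With `δ = ⌊log₂(n/2)⌋` we have `2^(δ+1) ≤ n < 2^(δ+2)`. Hence `n - 2^δ ≥ 2^δ`, so the left-hand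
side is at least `2δ`, while `n - 1 ≤ 2^(δ+2)` bounds the right-hand side by `δ + 2`. Equality
therefore forces `δ ≤ 2`, i.e. `n < 16`, and the finitely many remaining cases are computed.
-/

namespace Nat

theorem pow_succ_log_div_le {b n : ℕ} (hb : 0 < b) (hn : b ≤ n) : b ^ (log b (n / b) + 1) ≤ n :=
  calc b ^ (log b (n / b) + 1) = b ^ log b (n / b) * b := pow_succ ..
    _ ≤ n / b * b := Nat.mul_le_mul_right b (pow_log_le_self b (Nat.div_pos hn hb).ne')
    _ ≤ n := Nat.div_mul_le_self n b

theorem lt_pow_log_div_add_two {b : ℕ} (hb : 1 < b) (n : ℕ) : n < b ^ (log b (n / b) + 2) :=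
  calc n < b * (n / b + 1) := lt_mul_div_succ n (zero_lt_of_lt hb)
    _ ≤ b * b ^ (log b (n / b) + 1) := Nat.mul_le_mul_left b (lt_pow_succ_log_self hb _)
    _ = b ^ (log b (n / b) + 2) := by ring

theorem le_clog_of_pow_le {b k n : ℕ} (hb : 1 < b) (h : b ^ k ≤ n) : k ≤ clog b n :=
  (clog_pow b k hb).ge.trans (clog_mono_right b h)

end Nat

/-- Structures that are simultaneously complexity-optimal and latency-optimal
exist iff `n ∈ {3, 4, 6}`: for integers `n ≥ 3`, setting `δ = ⌊log₂(n/2)⌋`,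
one has `δ + ⌈log₂(n - 2^δ)⌉ = ⌈log₂(n-1)⌉` if and only if `n ∈ {3, 4, 6}`. -/
theorem co_lo_iff (n : ℕ) (hn : 3 ≤ n) :
    Nat.log 2 (n / 2) + Nat.clog 2 (n - 2 ^ Nat.log 2 (n / 2)) =
      Nat.clog 2 (n - 1) ↔ n = 3 ∨ n = 4 ∨ n = 6 := by
  by_cases hsmall : n < 16
  · interval_cases n <;> norm_num
  set δ := Nat.log 2 (n / 2)
  have hlow : 2 ^ (δ + 1) ≤ n := Nat.pow_succ_log_div_le two_pos (by omega)
  have hhigh : n < 2 ^ (δ + 2) := Nat.lt_pow_log_div_add_two one_lt_two n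
  have hδ : 3 ≤ δ := by
    have : 2 ^ 4 < 2 ^ (δ + 2) := by omega
    have := (Nat.pow_lt_pow_iff_right (by norm_num)).1 this
    omega
  have hlhs : δ ≤ Nat.clog 2 (n - 2 ^ δ) :=
    Nat.le_clog_of_pow_le one_lt_two (by rw [pow_succ] at hlow; omega)
  have hrhs : Nat.clog 2 (n - 1) ≤ δ + 2 := Nat.clog_le_of_le_pow (by omega)
  omega
end

section
/- Let n = 2^k + 1 with k ≥ 1. Define a directed graph S on nodes v_{i,j} for 0 ≤ i ≤ k, j ∈ ℤ/nℤ, where v_{0,j} = x_j, and with edges (v_{i-1,j}, v_{i,j}) and (v_{i-1, j+2^{i-1} mod n}, v_{i,j}) for 1 ≤ i ≤ k. Then for each j, the in-subgraph of v_{k,j} is a perfect directed binary tree of height k whose leaf set is {x_1,...,x_n} \ {x_{j-1}} (indices mod n). -/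
/-!
The vertex `(i, m)` reaches `(k, j)` iff `m - j` is the residue of a multiple of `2 ^ i` in
`[0, 2 ^ k)`. Indeed its two successors are `(i + 1, m)` and `(i + 1, m - 2 ^ i)`, and by the
parity of the quotient the multiples of `2 ^ i` below `2 ^ k` split into the multiples of
`2 ^ (i + 1)` and those shifted by `2 ^ i`. As `2 ^ k < n` there is no wrap-around, so the two
parts are disjoint: every vertex below `(k, j)` has exactly one successor below `(k, j)`, which
makes paths into `(k, j)` unique. At level `0` the condition reads `m - j ≠ 2 ^ k = -1`, and
since every edge raises the level by one, paths from level `0` have `k` edges.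
-/

/-- `IsDPath edge u v p` : the list of vertices `p` is a directed path (walk)
from `u` to `v` along `edge`. -/
def IsDPath {V : Type} (edge : V → V → Prop) (u v : V) (p : List V) : Prop :=
  List.Chain' edge p ∧ p.head? = some u ∧ p.getLast? = some v

/-- The edge relation of Construction 2: nodes `v_{i,j}` for `0 ≤ i ≤ k`,
`j ∈ ℤ/nℤ` with `n = 2^k + 1`, and edges `(v_{i-1,j}, v_{i,j})` and
`(v_{i-1, j+2^{i-1}}, v_{i,j})` for `1 ≤ i ≤ k`. -/
def consEdge (k : ℕ) :
    (Fin (k + 1) × ZMod (2 ^ k + 1)) → (Fin (k + 1) × ZMod (2 ^ k + 1)) → Prop :=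
  fun u v => (u.1 : ℕ) + 1 = (v.1 : ℕ) ∧
    (u.2 = v.2 ∨ u.2 = v.2 + (2 : ZMod (2 ^ k + 1)) ^ (u.1 : ℕ))

namespace IsDPath

variable {V : Type} {e : V → V → Prop} {u v : V}

theorem iff_isChain {p : List V} :
    IsDPath e u v p ↔ p.IsChain e ∧ p.head? = some u ∧ p.getLast? = some v :=
  Iff.rfl

theorem not_nil : ¬ IsDPath e u v [] := by
  simp [iff_isChain]

theorem singleton_iff {a : V} : IsDPath e u v [a] ↔ a = u ∧ u = v := by
  simp only [iff_isChain, List.isChain_singleton, List.head?_cons, List.getLast?_singleton,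
    Option.some.injEq, true_and]
  constructor <;> rintro ⟨rfl, rfl⟩ <;> exact ⟨rfl, rfl⟩

theorem cons_cons_iff {a b : V} {l : List V} :
    IsDPath e u v (a :: b :: l) ↔ a = u ∧ e u b ∧ IsDPath e b v (b :: l) := by
  simp only [iff_isChain, List.isChain_cons_cons, List.head?_cons, List.getLast?_cons_cons,
    Option.some.injEq]
  constructor
  · rintro ⟨⟨hab, hl⟩, rfl, hlast⟩; exact ⟨rfl, hab, hl, trivial, hlast⟩
  · rintro ⟨rfl, hab, hl, -, hlast⟩; exact ⟨⟨hab, hl⟩, rfl, hlast⟩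

theorem reflTransGen : ∀ {u : V} {p : List V}, IsDPath e u v p → Relation.ReflTransGen e u v
  | _, [], h => absurd h not_nil
  | _, [_], h => by rw [(singleton_iff.1 h).2]
  | _, _ :: _ :: _, h => by
    obtain ⟨rfl, hub, hp⟩ := cons_cons_iff.1 h
    exact .head hub hp.reflTransGen

theorem exists_of_reflTransGen (h : Relation.ReflTransGen e u v) : ∃ p, IsDPath e u v p := by
  induction h using Relation.ReflTransGen.head_induction_on with
  | refl => exact ⟨[v], singleton_iff.2 ⟨rfl, rfl⟩⟩
  | head hab _ ih =>
    obtain ⟨_ | ⟨c, _ | ⟨d, l⟩⟩, hp⟩ := ih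
    · exact absurd hp not_nil
    · obtain ⟨rfl, rfl⟩ := singleton_iff.1 hp
      exact ⟨_, cons_cons_iff.2 ⟨rfl, hab, hp⟩⟩
    · obtain ⟨rfl, -⟩ := cons_cons_iff.1 hp
      exact ⟨_, cons_cons_iff.2 ⟨rfl, hab, hp⟩⟩

theorem length_eq (f : V → ℕ) (hf : ∀ a b, e a b → f b = f a + 1) :
    ∀ {u : V} {p : List V}, IsDPath e u v p → f u + p.length = f v + 1
  | _, [], h => absurd h not_nil
  | _, [_], h => by rw [(singleton_iff.1 h).2]; rfl
  | u, _ :: b :: l, h => by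
    obtain ⟨rfl, hub, hp⟩ := cons_cons_iff.1 h
    have := length_eq f hf hp
    simp only [List.length_cons] at this ⊢
    rw [hf _ _ hub] at this
    omega

theorem eq_of_unique_successor (hv : ∀ w, ¬ e v w)
    (hsucc : ∀ u w w', e u w → e u w' → Relation.ReflTransGen e w v →
      Relation.ReflTransGen e w' v → w = w') :
    ∀ {u : V} {p q : List V}, IsDPath e u v p → IsDPath e u v q → p = q
  | _, [], _, hp, _ | _, _, [], _, hq => absurd ‹_› not_nil
  | _, [a], [b], hp, hq => by
    rw [(singleton_iff.1 hp).1, (singleton_iff.1 hq).1]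
  | _, [_], _ :: _ :: _, hp, hq | _, _ :: _ :: _, [_], hq, hp => by
    obtain ⟨-, rfl⟩ := singleton_iff.1 hp
    exact absurd (cons_cons_iff.1 hq).2.1 (hv _)
  | _, _ :: b :: l, _ :: c :: m, hp, hq => by
    obtain ⟨rfl, hub, hbl⟩ := cons_cons_iff.1 hp
    obtain ⟨rfl, huc, hcm⟩ := cons_cons_iff.1 hq
    obtain rfl := hsucc _ _ _ hub huc hbl.reflTransGen hcm.reflTransGen
    rw [eq_of_unique_successor hv hsucc hbl hcm]

end IsDPath

theorem Nat.add_lt_of_two_mul_dvd {a b s : ℕ} (hb : 2 * a ∣ b) (hs : s < b) (hsa : 2 * a ∣ s) :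
    s + a < b := by
  obtain ⟨r, rfl⟩ := hsa
  obtain ⟨c, rfl⟩ := hb
  have hrc : r + 1 ≤ c := Nat.lt_of_mul_lt_mul_left hs
  nlinarith [Nat.mul_le_mul_left (2 * a) hrc]

namespace ZMod

def IsMultipleBelow {n : ℕ} (a b : ℕ) (x : ZMod n) : Prop :=
  ∃ s : ℕ, s < b ∧ a ∣ s ∧ x = s

variable {n a b : ℕ} {x : ZMod n}

theorem isMultipleBelow_self_iff (hb : 0 < b) : IsMultipleBelow b b x ↔ x = 0 := by
  constructor
  · rintro ⟨s, hs, hbs, rfl⟩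
    rw [Nat.eq_zero_of_dvd_of_lt hbs hs, Nat.cast_zero]
  · rintro rfl
    exact ⟨0, hb, dvd_zero b, Nat.cast_zero.symm⟩

theorem isMultipleBelow_one_iff {x : ZMod (b + 1)} : IsMultipleBelow 1 b x ↔ x ≠ -1 := by
  have hval : x = -1 ↔ x.val = b := by
    rw [← (val_injective (b + 1)).eq_iff]
    exact iff_of_eq (congrArg _ (val_neg_one b))
  rw [Ne, hval]
  constructor
  · rintro ⟨s, hs, -, rfl⟩
    rw [val_cast_of_lt (by omega)]
    exact hs.ne
  · intro hx
    exact ⟨x.val, lt_of_le_of_ne (Nat.lt_succ_iff.1 x.val_lt) hx, one_dvd _,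
      (natCast_zmod_val x).symm⟩

theorem isMultipleBelow_iff_double (hb : 2 * a ∣ b) :
    IsMultipleBelow a b x ↔
      IsMultipleBelow (2 * a) b x ∨ IsMultipleBelow (2 * a) b (x - (a : ZMod n)) := by
  constructor
  · rintro ⟨s, hs, ⟨t, rfl⟩, rfl⟩
    obtain ⟨r, rfl | rfl⟩ := Nat.even_or_odd' t
    · exact Or.inl ⟨2 * a * r, by linarith, dvd_mul_right _ _, by push_cast; ring⟩
    · exact Or.inr ⟨2 * a * r, by linarith, dvd_mul_right _ _, by push_cast; ring⟩
  · rintro (⟨s, hs, hsa, rfl⟩ | ⟨s, hs, hsa, hx⟩)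
    · exact ⟨s, hs, dvd_trans (dvd_mul_left a 2) hsa, rfl⟩
    · refine ⟨s + a, Nat.add_lt_of_two_mul_dvd hb hs hsa,
        (Nat.dvd_add_left (dvd_refl a)).2 (dvd_trans (dvd_mul_left a 2) hsa), ?_⟩
      rw [Nat.cast_add, ← hx, sub_add_cancel]

theorem not_isMultipleBelow_double_and_sub (ha : 0 < a) (hb : 2 * a ∣ b) (hbn : b ≤ n) :
    ¬ (IsMultipleBelow (2 * a) b x ∧ IsMultipleBelow (2 * a) b (x - (a : ZMod n))) := by
  rintro ⟨⟨s, hs, hsa, rfl⟩, ⟨t, ht, hta, hx⟩⟩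
  have hlt : t + a < b := Nat.add_lt_of_two_mul_dvd hb ht hta
  have hst : s = t + a := by
    have hcast : (s : ZMod n) = ((t + a : ℕ) : ZMod n) := by
      rw [Nat.cast_add, ← hx, sub_add_cancel]
    rw [ZMod.natCast_eq_natCast_iff', Nat.mod_eq_of_lt (by omega),
      Nat.mod_eq_of_lt (by omega)] at hcast
    exact hcast
  subst hst
  have : 2 * a ∣ a := (Nat.dvd_add_right hta).1 hsa
  have := Nat.le_of_dvd ha this
  omega

end ZMod

open ZMod

section consEdge

variable {k : ℕ}

theorem consEdge_iff {u w : Fin (k + 1) × ZMod (2 ^ k + 1)} :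
    consEdge k u w ↔ (w.1 : ℕ) = u.1 + 1 ∧ (w.2 = u.2 ∨ w.2 = u.2 - 2 ^ (u.1 : ℕ)) := by
  rw [consEdge, eq_comm, eq_comm (a := u.2), eq_sub_iff_add_eq, eq_comm (a := w.2 + _)]

theorem not_consEdge_last (m : ZMod (2 ^ k + 1)) (w : Fin (k + 1) × ZMod (2 ^ k + 1)) :
    ¬ consEdge k (Fin.last k, m) w := by
  rintro ⟨h, -⟩
  have := w.1.isLt
  simp only [Fin.val_last] at h
  omega

theorem consEdge_castSucc_iff {i : Fin k} {m : ZMod (2 ^ k + 1)}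
    {w : Fin (k + 1) × ZMod (2 ^ k + 1)} :
    consEdge k (i.castSucc, m) w ↔ w = (i.succ, m) ∨ w = (i.succ, m - 2 ^ (i : ℕ)) := by
  rw [consEdge_iff, Fin.val_castSucc, ← Fin.val_succ, Fin.val_inj]
  obtain ⟨w₁, w₂⟩ := w
  simp only [Prod.mk.injEq]
  tauto

theorem reflTransGen_consEdge_last_iff (j : ZMod (2 ^ k + 1))
    (u : Fin (k + 1) × ZMod (2 ^ k + 1)) :
    Relation.ReflTransGen (consEdge k) u (Fin.last k, j) ↔
      IsMultipleBelow (2 ^ (u.1 : ℕ)) (2 ^ k) (u.2 - j) := by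
  obtain ⟨i, m⟩ := u
  induction i using Fin.reverseInduction generalizing m with
  | last =>
    rw [Relation.ReflTransGen.cases_head_iff, Fin.val_last,
      isMultipleBelow_self_iff (Nat.two_pow_pos k), sub_eq_zero]
    simp [not_consEdge_last]
  | cast i ih =>
    rw [Relation.ReflTransGen.cases_head_iff]
    have hne : (i.castSucc, m) ≠ (Fin.last k, j) := fun h =>
      Fin.castSucc_ne_last i (congrArg Prod.fst h)
    simp only [hne, false_or, consEdge_castSucc_iff, exists_eq_or_imp, exists_eq_left, ih,
      Fin.val_succ, Fin.val_castSucc, pow_succ', sub_right_comm m]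
    have hdvd : 2 * 2 ^ (i : ℕ) ∣ 2 ^ k := pow_succ' 2 (i : ℕ) ▸ pow_dvd_pow 2 i.isLt
    exact_mod_cast (isMultipleBelow_iff_double hdvd).symm

theorem eq_of_consEdge_of_reflTransGen_last {j : ZMod (2 ^ k + 1)}
    {u w w' : Fin (k + 1) × ZMod (2 ^ k + 1)} (hw : consEdge k u w) (hw' : consEdge k u w')
    (hwj : Relation.ReflTransGen (consEdge k) w (Fin.last k, j))
    (hw'j : Relation.ReflTransGen (consEdge k) w' (Fin.last k, j)) : w = w' := by
  obtain ⟨i, m⟩ := u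
  obtain ⟨i₁, m₁⟩ := w
  obtain ⟨i₂, m₂⟩ := w'
  rw [consEdge_iff] at hw hw'
  rw [reflTransGen_consEdge_last_iff] at hwj hw'j
  dsimp only at hw hw' hwj hw'j
  obtain ⟨hi₁, hm₁⟩ := hw
  obtain ⟨hi₂, hm₂⟩ := hw'
  obtain rfl : i₁ = i₂ := Fin.ext (hi₁.trans hi₂.symm)
  have hik : (i : ℕ) + 1 ≤ k := by have := i₁.isLt; omega
  have hdvd : 2 * 2 ^ (i : ℕ) ∣ 2 ^ k := pow_succ' 2 (i : ℕ) ▸ pow_dvd_pow 2 hik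
  have hdisj := not_isMultipleBelow_double_and_sub (x := m - j) (Nat.two_pow_pos _) hdvd
    (Nat.le_succ _)
  simp only [hi₁, pow_succ', Nat.cast_pow, Nat.cast_ofNat] at hwj hw'j hdisj
  rcases hm₁ with rfl | rfl <;> rcases hm₂ with rfl | rfl
  · rfl
  · exact absurd ⟨hwj, by rwa [sub_right_comm] at hw'j⟩ hdisj
  · exact absurd ⟨hw'j, by rwa [sub_right_comm] at hwj⟩ hdisj
  · rfl

end consEdge

/-- The in-subgraph of `(k, j)` is a tree because paths into `(k, j)` are unique, and it is
perfect of height `k` because every path from a leaf (a level-`0` vertex) has `k` edges. -/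
theorem construction_perfect_tree_general (k : ℕ) (j : ZMod (2 ^ k + 1)) :
    (∀ m : ZMod (2 ^ k + 1),
      Relation.ReflTransGen (consEdge k) ((0 : Fin (k + 1)), m) (Fin.last k, j) ↔
        m ≠ j - 1) ∧
    (∀ u, Relation.ReflTransGen (consEdge k) u (Fin.last k, j) →
      ∃! p : List (Fin (k + 1) × ZMod (2 ^ k + 1)),
        IsDPath (consEdge k) u (Fin.last k, j) p) ∧
    (∀ (m : ZMod (2 ^ k + 1)) (p : List (Fin (k + 1) × ZMod (2 ^ k + 1))),
      IsDPath (consEdge k) ((0 : Fin (k + 1)), m) (Fin.last k, j) p →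
        p.length = k + 1) := by
  refine ⟨fun m => ?_, fun u hu => ?_, fun m p hp => ?_⟩
  · rw [reflTransGen_consEdge_last_iff, Fin.val_zero, pow_zero, isMultipleBelow_one_iff]
    simp only [Ne, sub_eq_iff_eq_add, neg_add_eq_sub]
  · obtain ⟨p, hp⟩ := IsDPath.exists_of_reflTransGen hu
    exact ⟨p, hp, fun q hq => hq.eq_of_unique_successor (not_consEdge_last j)
      (fun _ _ _ => eq_of_consEdge_of_reflTransGen_last) hp⟩
  · have := hp.length_eq (fun u => u.1) fun _ _ h => (consEdge_iff.1 h).1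
    simpa [add_comm] using this

/-- For `n = 2^k + 1` with `k ≥ 1`, in the graph of Construction 2, the
in-subgraph of each `v_{k,j}` is a perfect directed binary tree of height `k`
whose leaf set is `{x_1, …, x_n} \ {x_{j-1}}` (indices mod `n`): the level-0
nodes `(0, m)` reaching `(k, j)` are exactly those with `m ≠ j - 1`, from every
node reaching `(k, j)` there is a unique directed path to `(k, j)` (so the
in-subgraph is a tree), and every path from a level-0 node to `(k, j)` has
exactly `k` edges (all leaves are at depth `k`). -/
theorem construction_perfect_tree (k : ℕ) (hk : 1 ≤ k) (j : ZMod (2 ^ k + 1)) :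
    (∀ m : ZMod (2 ^ k + 1),
      Relation.ReflTransGen (consEdge k) ((0 : Fin (k + 1)), m) (Fin.last k, j) ↔
        m ≠ j - 1) ∧
    (∀ u, Relation.ReflTransGen (consEdge k) u (Fin.last k, j) →
      ∃! p : List (Fin (k + 1) × ZMod (2 ^ k + 1)),
        IsDPath (consEdge k) u (Fin.last k, j) p) ∧
    (∀ (m : ZMod (2 ^ k + 1)) (p : List (Fin (k + 1) × ZMod (2 ^ k + 1))),
      IsDPath (consEdge k) ((0 : Fin (k + 1)), m) (Fin.last k, j) p →
        p.length = k + 1) :=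
  construction_perfect_tree_general k j
end
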